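/- arXiv:2602.00478 — 2 statements merged into one kernel-verified Lean document; each statement's English description precedes it below -/
import Mathlib

section
/- The Smooth Sum-of-Minimum scalarization is supermodular: for finite nonempty sets X_U ⊆ X_W ⊆ 𝒳, any x' ∈ 𝒳 \ X_W, and μ > 0, g_μ^SSoM(X_U) - g_μ^SSoM(X_U ∪ {x'}) ≥ g_μ^SSoM(X_W) - g_μ^SSoM(X_W ∪ {x'}). -/
/-!
Per objective `m`, the SSoM gain of adding `x'` to `X` is `μ · log (1 + e / S(X))`, with
`e = exp (-ṽ_m(x') / μ)` and `S(X) = ∑ x ∈ X, exp (-ṽ_m(x) / μ)`. Since `S` is monotone in `X`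
and `t ↦ log (1 + e / t)` is antitone on `(0, ∞)`, the gain can only shrink as `X` grows.
-/

open Finset Real

theorem Real.log_add_sub_log_le_of_le {a b e : ℝ} (ha : 0 < a) (hab : a ≤ b) (he : 0 ≤ e) :
    log (b + e) - log b ≤ log (a + e) - log a := by
  have hb : 0 < b := ha.trans_le hab
  rw [← log_div (by positivity) hb.ne', ← log_div (by positivity) ha.ne']
  refine log_le_log (by positivity) ?_
  rw [div_le_div_iff₀ hb ha]
  nlinarith

theorem Finset.log_sum_insert_sub_le_of_subset {ι : Type*} [DecidableEq ι] {w : ι → ℝ}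
    (hw : ∀ i, 0 ≤ w i) {U W : Finset ι} (hU : 0 < ∑ i ∈ U, w i) (hUW : U ⊆ W) {j : ι}
    (hj : j ∉ W) :
    log (∑ i ∈ insert j W, w i) - log (∑ i ∈ W, w i) ≤
      log (∑ i ∈ insert j U, w i) - log (∑ i ∈ U, w i) := by
  rw [sum_insert hj, sum_insert (fun h => hj (hUW h)), add_comm (w j), add_comm (w j)]
  exact log_add_sub_log_le_of_le hU (sum_le_sum_of_subset_of_nonneg hUW fun i _ _ => hw i) (hw j)

theorem ssom_supermodular_general {𝒳 : Type*} [DecidableEq 𝒳] (M : ℕ)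
    (v : Fin M → 𝒳 → ℝ) (μ : ℝ) (hμ : 0 < μ)
    (XU XW : Finset 𝒳) (hne : XU.Nonempty) (hsub : XU ⊆ XW) (x' : 𝒳) (hx' : x' ∉ XW) :
    (-(∑ m, μ * Real.log (∑ x ∈ XU, Real.exp (-v m x / μ))) -
        -(∑ m, μ * Real.log (∑ x ∈ insert x' XU, Real.exp (-v m x / μ)))) ≥
      (-(∑ m, μ * Real.log (∑ x ∈ XW, Real.exp (-v m x / μ))) -
        -(∑ m, μ * Real.log (∑ x ∈ insert x' XW, Real.exp (-v m x / μ)))) := by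
  have gain_le (m : Fin M) :
      μ * log (∑ x ∈ insert x' XW, exp (-v m x / μ)) - μ * log (∑ x ∈ XW, exp (-v m x / μ)) ≤
        μ * log (∑ x ∈ insert x' XU, exp (-v m x / μ)) -
          μ * log (∑ x ∈ XU, exp (-v m x / μ)) := by
    rw [← mul_sub, ← mul_sub]
    exact mul_le_mul_of_nonneg_left (log_sum_insert_sub_le_of_subset (fun x => (exp_pos _).le)
      (sum_pos (fun x _ => exp_pos _) hne) hsub hx') hμ.le
  have := sum_le_sum fun m (_ : m ∈ univ) => gain_le m
  simp only [sum_sub_distrib] at this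
  linarith

/-- Supermodularity of the Smooth Sum-of-Minimum scalarization: for finite nonempty
sets `XU ⊆ XW`, any `x' ∉ XW`, and `μ > 0`,
`g_μ^SSoM(XU) - g_μ^SSoM(XU ∪ {x'}) ≥ g_μ^SSoM(XW) - g_μ^SSoM(XW ∪ {x'})`, where
`g_μ^SSoM(X) = -∑ m, μ·log (∑ x ∈ X, exp (-v m x / μ))`. -/
theorem ssom_supermodular {𝒳 : Type*} [DecidableEq 𝒳] (M : ℕ) (hM : 1 ≤ M)
    (v : Fin M → 𝒳 → ℝ) (μ : ℝ) (hμ : 0 < μ)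
    (XU XW : Finset 𝒳) (hne : XU.Nonempty) (hsub : XU ⊆ XW) (x' : 𝒳) (hx' : x' ∉ XW) :
    (-(∑ m, μ * Real.log (∑ x ∈ XU, Real.exp (-v m x / μ))) -
        -(∑ m, μ * Real.log (∑ x ∈ insert x' XU, Real.exp (-v m x / μ)))) ≥
      (-(∑ m, μ * Real.log (∑ x ∈ XW, Real.exp (-v m x / μ))) -
        -(∑ m, μ * Real.log (∑ x ∈ insert x' XW, Real.exp (-v m x / μ)))) :=
  ssom_supermodular_general M v μ hμ XU XW hne hsub x' hx'
end

section
/- Every solution in a solution set minimizing the weighted Smooth Sum-of-Minimum scalarization with all strictly positive weights (λ_m > 0 for all m) is Pareto optimal: no x^(p) ∈ X* is dominated by any x̂ ∈ 𝒳 satisfying ṽ_m(x̂) ≤ ṽ_m(x^(p)) for all m with strict inequality for some m. -/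
/-!
Each term `-μ log ∑ₖ exp (-cₖ / μ)` of the scalarization is a smooth minimum of the costs
`cₖ`, and it is strictly increasing in the cost vector. With strictly positive weights the
scalarization is therefore strictly increasing as well, so swapping `x p` for a point that
dominates it would produce a strictly better solution set.
-/

open Real Finset Function

noncomputable def softMin {ι : Type*} [Fintype ι] (μ : ℝ) (c : ι → ℝ) : ℝ :=
  -μ * log (∑ k, exp (-c k / μ))

theorem softMin_strictMono {ι : Type*} [Fintype ι] {μ : ℝ} (hμ : 0 < μ) :
    StrictMono (softMin (ι := ι) μ) := by
  intro c d hcd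
  obtain ⟨hle, i, hlt⟩ := Pi.lt_def.1 hcd
  have hterm : ∀ k, exp (-d k / μ) ≤ exp (-c k / μ) := fun k => by
    gcongr
    exact hle k
  have hsum : ∑ k, exp (-d k / μ) < ∑ k, exp (-c k / μ) :=
    sum_lt_sum (fun k _ => hterm k) ⟨i, mem_univ i, by gcongr⟩
  have hpos : 0 < ∑ k, exp (-d k / μ) := sum_pos (fun k _ => exp_pos _) ⟨i, mem_univ i⟩
  unfold softMin
  rw [neg_mul, neg_mul, neg_lt_neg_iff]
  exact mul_lt_mul_of_pos_left (log_lt_log hpos hsum) hμ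

theorem StrictMono.weighted_sum {κ α : Type*} [Fintype κ] [PartialOrder α] {f : α → ℝ}
    (hf : StrictMono f) {w : κ → ℝ} (hw : ∀ m, 0 < w m) :
    StrictMono fun c : κ → α => ∑ m, w m * f (c m) := by
  intro c d hcd
  obtain ⟨hle, m, hlt⟩ := Pi.lt_def.1 hcd
  exact sum_lt_sum (fun n _ => mul_le_mul_of_nonneg_left (hf.monotone (hle n)) (hw n).le)
    ⟨m, mem_univ m, mul_lt_mul_of_pos_left (hf hlt) (hw m)⟩

theorem ssom_pareto_general {𝒳 : Type*} (M K : ℕ)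
    (v : Fin M → 𝒳 → ℝ) (μ : ℝ) (hμ : 0 < μ) (lam : Fin M → ℝ) (hlam : ∀ m, 0 < lam m)
    (x : Fin K → 𝒳)
    (hmin : ∀ y : Fin K → 𝒳,
      -μ * ∑ m, lam m * Real.log (∑ k, Real.exp (-v m (x k) / μ)) ≤
        -μ * ∑ m, lam m * Real.log (∑ k, Real.exp (-v m (y k) / μ))) :
    ∀ p : Fin K, ¬∃ xhat : 𝒳,
      (∀ m, v m xhat ≤ v m (x p)) ∧ (∃ m, v m xhat < v m (x p)) := by
  rintro p ⟨xhat, hle, m, hlt⟩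
  have hobj : ∀ y : Fin K → 𝒳,
      -μ * ∑ m, lam m * log (∑ k, exp (-v m (y k) / μ)) = ∑ m, lam m * softMin μ (v m ∘ y) :=
    fun y => by
      simp only [softMin, comp_apply, mul_sum]
      exact sum_congr rfl fun _ _ => by ring
  have hbetter : (fun n => v n ∘ update x p xhat) < fun n => v n ∘ x := by
    refine Pi.lt_def.2 ⟨fun n => ?_, m, ?_⟩ <;> simp only [comp_update]
    · exact update_le_self_iff.2 (hle n)
    · exact update_lt_self_iff.2 hlt
  have hlt_obj := (softMin_strictMono hμ).weighted_sum hlam hbetter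
  have hle_obj := hmin (update x p xhat)
  rw [hobj, hobj] at hle_obj
  exact hle_obj.not_gt hlt_obj

/-- Every solution in a solution set minimizing the weighted Smooth Sum-of-Minimum
scalarization with all strictly positive weights (`λ m > 0` for all `m`) is Pareto
optimal: no `x p` is dominated by any `x̂ ∈ 𝒳` satisfying `v m x̂ ≤ v m (x p)` for
all `m` with strict inequality for some `m`. -/
theorem ssom_pareto {𝒳 : Type*} (M K : ℕ) (hM : 1 ≤ M) (hK : 1 ≤ K)
    (v : Fin M → 𝒳 → ℝ) (μ : ℝ) (hμ : 0 < μ) (lam : Fin M → ℝ) (hlam : ∀ m, 0 < lam m)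
    (x : Fin K → 𝒳)
    (hmin : ∀ y : Fin K → 𝒳,
      -μ * ∑ m, lam m * Real.log (∑ k, Real.exp (-v m (x k) / μ)) ≤
        -μ * ∑ m, lam m * Real.log (∑ k, Real.exp (-v m (y k) / μ))) :
    ∀ p : Fin K, ¬∃ xhat : 𝒳,
      (∀ m, v m xhat ≤ v m (x p)) ∧ (∃ m, v m xhat < v m (x p)) :=
  ssom_pareto_general M K v μ hμ lam hlam x hmin
end
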